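/- Let A be a maximal almost disjoint family on ω. Then the Isbell–Mrówka space Ψ(A) is strongly 2-starcompact: for every open cover U of Ψ(A) there is a finite F ⊆ Ψ(A) with St^2(F,U) = Ψ(A). -/
import Mathlib


open Set Filter Topology

/-- `𝒰` is an open cover of the space `X`. -/
def IsOpenCover {X : Type} [TopologicalSpace X] (𝒰 : Set (Set X)) : Prop :=
  (∀ u ∈ 𝒰, IsOpen u) ∧ ⋃₀ 𝒰 = Set.univ

/-- The star of a set `A` with respect to a collection `𝒰`. -/
def st {X : Type} (A : Set X) (𝒰 : Set (Set X)) : Set X :=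
  ⋃₀ {u ∈ 𝒰 | (u ∩ A).Nonempty}
/-- The `n`-fold iterated star `St^n(A,𝒰)`. -/
def iterSt {X : Type} : ℕ → Set X → Set (Set X) → Set X
  | 0, A, _ => A
  | n + 1, A, 𝒰 => st (iterSt n A 𝒰) 𝒰

/-- `𝒜` is an almost disjoint family of infinite subsets of `ℕ`. -/
def IsAlmostDisjointFamily (𝒜 : Set (Set ℕ)) : Prop :=
  (∀ a ∈ 𝒜, a.Infinite) ∧
    ∀ a ∈ 𝒜, ∀ b ∈ 𝒜, a ≠ b → (a ∩ b).Finite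

/-- `𝒜` is a maximal almost disjoint family. -/
def IsMADFamily (𝒜 : Set (Set ℕ)) : Prop :=
  IsAlmostDisjointFamily 𝒜 ∧
    ∀ B : Set ℕ, B.Infinite → ∃ a ∈ 𝒜, (B ∩ a).Infinite

/-- The topology of the Isbell–Mrówka space `Ψ(𝒜)` on `↥𝒜 ⊕ ℕ`: points of `ℕ`
are isolated and a set is open iff it almost contains `a` (as a set of naturals)
whenever it contains the point `a ∈ 𝒜`. -/
def psiTop (𝒜 : Set (Set ℕ)) : TopologicalSpace (↥𝒜 ⊕ ℕ) where
  IsOpen s := ∀ a : ↥𝒜, Sum.inl a ∈ s → {n ∈ (a : Set ℕ) | Sum.inr n ∉ s}.Finite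
  isOpen_univ := by intro a _; simp
  isOpen_inter := by
    intro s t hs ht a ha
    have : {n ∈ (a : Set ℕ) | Sum.inr n ∉ s ∩ t} ⊆
        {n ∈ (a : Set ℕ) | Sum.inr n ∉ s} ∪ {n ∈ (a : Set ℕ) | Sum.inr n ∉ t} := by
      intro n hn
      rcases hn with ⟨hna, hnst⟩
      by_cases hns : Sum.inr n ∈ s
      · exact Or.inr ⟨hna, fun hnt => hnst ⟨hns, hnt⟩⟩
      · exact Or.inl ⟨hna, hns⟩
    exact Set.Finite.subset ((hs a ha.1).union (ht a ha.2)) this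
  isOpen_sUnion := by
    intro S hS a ha
    rcases ha with ⟨s, hsS, has⟩
    have : {n ∈ (a : Set ℕ) | Sum.inr n ∉ ⋃₀ S} ⊆ {n ∈ (a : Set ℕ) | Sum.inr n ∉ s} := by
      intro n hn
      exact ⟨hn.1, fun hns => hn.2 ⟨s, hsS, hns⟩⟩
    exact Set.Finite.subset (hS s hsS a has) this

/-- `X` is `k`-starcompact. -/
def KStarCompact (X : Type) [TopologicalSpace X] (k : ℕ) : Prop :=
  ∀ 𝒰 : Set (Set X), IsOpenCover 𝒰 →
    ∃ 𝒲 ⊆ 𝒰, 𝒲.Finite ∧ iterSt k (⋃₀ 𝒲) 𝒰 = Set.univ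

/-- `X` is strongly `k`-starcompact. -/
def StronglyKStarCompact (X : Type) [TopologicalSpace X] (k : ℕ) : Prop :=
  ∀ 𝒰 : Set (Set X), IsOpenCover 𝒰 →
    ∃ F : Set X, F.Finite ∧ iterSt k F 𝒰 = Set.univ

theorem stmt (𝒜 : Set (Set ℕ)) (hmad : IsMADFamily 𝒜) :
    @StronglyKStarCompact (↥𝒜 ⊕ ℕ) (psiTop 𝒜) 2 := by
  classical
  obtain ⟨⟨hinf, _hdisj⟩, hmax⟩ := hmad
  intro 𝒰 h𝒰
  obtain ⟨hopen, hcover⟩ := h𝒰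
  have hmem : ∀ x : ↥𝒜 ⊕ ℕ, ∃ u ∈ 𝒰, x ∈ u := by
    intro x
    have hx : x ∈ ⋃₀ 𝒰 := by rw [hcover]; trivial
    exact hx
  have hsub : ∀ B : Set (↥𝒜 ⊕ ℕ), B ⊆ st B 𝒰 := by
    intro B x hx
    obtain ⟨u, hu, hxu⟩ := hmem x
    exact ⟨u, ⟨hu, ⟨x, hxu, hx⟩⟩, hxu⟩
  have hstmono : ∀ B C : Set (↥𝒜 ⊕ ℕ), B ⊆ C → st B 𝒰 ⊆ st C 𝒰 := by
    intro B C hBC x hx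
    obtain ⟨u, ⟨hu, y, hy1, hy2⟩, hxu⟩ := hx
    exact ⟨u, ⟨hu, y, hy1, hBC hy2⟩, hxu⟩
  have hU : ∀ a : ↥𝒜, ∃ u ∈ 𝒰, Sum.inl a ∈ u := fun a => hmem _
  choose U hU1 hU2 using hU
  have hUopen : ∀ a : ↥𝒜, {n ∈ (a : Set ℕ) | Sum.inr n ∉ U a}.Finite :=
    fun a => hopen (U a) (hU1 a) a (hU2 a)
  set S : Set ℕ := {n | ∃ a : ↥𝒜, Sum.inr n ∈ U a} with hSdef
  have hScof : Sᶜ.Finite := by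
    by_contra h
    obtain ⟨b, hb, hbinf⟩ := hmax Sᶜ h
    have hss : Sᶜ ∩ b ⊆ {n ∈ b | Sum.inr n ∉ U ⟨b, hb⟩} := by
      intro n ⟨hn1, hn2⟩
      exact ⟨hn2, fun hc => hn1 ⟨⟨b, hb⟩, hc⟩⟩
    exact hbinf (Set.Finite.subset (hUopen ⟨b, hb⟩) hss)
  have key : ∃ F : Finset ℕ, ∀ a : ↥𝒜,
      (U a ∩ st (Sum.inr '' (↑F : Set ℕ)) 𝒰).Nonempty := by
    by_contra h
    push_neg at h
    choose α hα using h
    have hpt : ∀ F : Finset ℕ, ∃ m : ℕ, Sum.inr m ∈ U (α F) := by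
      intro F
      have hi : ((α F : Set ℕ) \ {n ∈ ((α F : ↥𝒜) : Set ℕ) | Sum.inr n ∉ U (α F)}).Infinite :=
        Set.Infinite.diff (hinf _ (α F).2) (hUopen (α F))
      obtain ⟨m, hm1, hm2⟩ := hi.nonempty
      by_cases hc : Sum.inr m ∈ U (α F)
      · exact ⟨m, hc⟩
      · exact absurd ⟨hm1, hc⟩ hm2
    choose ν hν using hpt
    have hex : ∃ Fs : ℕ → Finset ℕ, ∀ k, Fs (k + 1) = insert (ν (Fs k)) (Fs k) :=
      ⟨fun k => Nat.rec ∅ (fun _ p => insert (ν p) p) k, fun _ => rfl⟩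
    obtain ⟨Fs, Fs_succ⟩ := hex
    have hnotin : ∀ F : Finset ℕ, ν F ∉ F := by
      intro F hc
      have h1 : Sum.inr (ν F) ∈ st (Sum.inr '' (↑F : Set ℕ)) 𝒰 :=
        hsub _ ⟨ν F, hc, rfl⟩
      have h2 : Sum.inr (ν F) ∈ U (α F) ∩ st (Sum.inr '' (↑F : Set ℕ)) 𝒰 := ⟨hν F, h1⟩
      rw [hα F] at h2
      exact h2
    have Fmono : ∀ i j : ℕ, i ≤ j → Fs i ⊆ Fs j := by
      intro i j hij
      induction j, hij using Nat.le_induction with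
      | base => exact fun x hx => hx
      | succ j _ ih =>
        intro x hx
        rw [Fs_succ]
        exact Finset.mem_insert_of_mem (ih hx)
    have hmemFs : ∀ i j : ℕ, i < j → ν (Fs i) ∈ Fs j := by
      intro i j hij
      apply Fmono (i + 1) j hij
      rw [Fs_succ]
      exact Finset.mem_insert_self _ _
    have main : ∀ i j : ℕ, i < j → ∀ b' : ↥𝒜, Sum.inr (ν (Fs i)) ∈ U b' →
        Sum.inr (ν (Fs j)) ∈ U b' → False := by
      intro i j hij b' hi hj
      have himg : Sum.inr (ν (Fs i)) ∈
          ((Sum.inr '' ((Fs j : Finset ℕ) : Set ℕ)) : Set (↥𝒜 ⊕ ℕ)) :=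
        by
          refine Set.mem_image_of_mem _ ?_
          exact_mod_cast hmemFs i j hij
      have hst : Sum.inr (ν (Fs j)) ∈ st (Sum.inr '' ((Fs j : Finset ℕ) : Set ℕ)) 𝒰 :=
        ⟨U b', ⟨hU1 b', ⟨Sum.inr (ν (Fs i)), hi, himg⟩⟩, hj⟩
      have h2 : Sum.inr (ν (Fs j)) ∈ U (α (Fs j)) ∩ st (Sum.inr '' ((Fs j : Finset ℕ) : Set ℕ)) 𝒰 :=
        ⟨hν _, hst⟩
      rw [hα] at h2
      exact h2
    have ninj : Function.Injective (fun k => ν (Fs k)) := by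
      have hne : ∀ i j : ℕ, i < j → ν (Fs i) ≠ ν (Fs j) := by
        intro i j hij heq
        exact hnotin (Fs j) (heq ▸ hmemFs i j hij)
      intro i j hij
      rcases lt_trichotomy i j with h | h | h
      · exact absurd hij (hne i j h)
      · exact h
      · exact absurd hij.symm (hne j i h)
    have Binf : (Set.range fun k => ν (Fs k)).Infinite :=
      Set.infinite_range_of_injective ninj
    obtain ⟨b, hb, hbinf⟩ := hmax _ Binf
    set b' : ↥𝒜 := ⟨b, hb⟩
    have hV : (((Set.range fun k => ν (Fs k)) ∩ b) \
        {n ∈ ((b' : ↥𝒜) : Set ℕ) | Sum.inr n ∉ U b'}).Infinite :=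
      Set.Infinite.diff hbinf (hUopen b')
    obtain ⟨m₁, hm₁⟩ := hV.nonempty
    obtain ⟨m₂, hm₂⟩ := (hV.diff (Set.finite_singleton m₁)).nonempty
    have hne12 : m₂ ≠ m₁ := by
      intro hc
      exact hm₂.2 (hc ▸ rfl)
    have hUm : ∀ m, m ∈ ((Set.range fun k => ν (Fs k)) ∩ b) \
        {n ∈ ((b' : ↥𝒜) : Set ℕ) | Sum.inr n ∉ U b'} → Sum.inr m ∈ U b' := by
      intro m ⟨⟨_, hmb⟩, hm2⟩
      by_contra hc
      exact hm2 ⟨hmb, hc⟩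
    have hu1 : Sum.inr m₁ ∈ U b' := hUm m₁ hm₁
    have hu2 : Sum.inr m₂ ∈ U b' := hUm m₂ hm₂.1
    obtain ⟨i, hi⟩ := hm₁.1.1
    obtain ⟨j, hj⟩ := hm₂.1.1.1
    have hijne : i ≠ j := by
      intro hc
      exact hne12 (by rw [← hi, ← hj, hc])
    have hi' : ν (Fs i) = m₁ := hi
    have hj' : ν (Fs j) = m₂ := hj
    rcases lt_or_gt_of_ne hijne with h | h
    · exact main i j h b' (by rw [hi']; exact hu1) (by rw [hj']; exact hu2)
    · exact main j i h b' (by rw [hj']; exact hu2) (by rw [hi']; exact hu1)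
  obtain ⟨F₀, hF₀⟩ := key
  refine ⟨Sum.inr '' (↑F₀ : Set ℕ) ∪ Sum.inr '' Sᶜ,
    ((F₀.finite_toSet).image _).union (hScof.image _), ?_⟩
  show st (st (Sum.inr '' (↑F₀ : Set ℕ) ∪ Sum.inr '' Sᶜ) 𝒰) 𝒰 = Set.univ
  apply Set.eq_univ_iff_forall.mpr
  intro x
  have hcase : ∀ a : ↥𝒜, ∀ y : ↥𝒜 ⊕ ℕ, y ∈ U a →
      y ∈ st (st (Sum.inr '' (↑F₀ : Set ℕ) ∪ Sum.inr '' Sᶜ) 𝒰) 𝒰 := by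
    intro a y hy
    obtain ⟨z, hz1, hz2⟩ := hF₀ a
    exact ⟨U a, ⟨hU1 a, ⟨z, hz1,
      hstmono _ _ (Set.subset_union_left) hz2⟩⟩, hy⟩
  cases x with
  | inl a => exact hcase a _ (hU2 a)
  | inr m =>
    by_cases hmS : m ∈ S
    · obtain ⟨a, ha⟩ := hmS
      exact hcase a _ ha
    · have hxF : Sum.inr m ∈
          ((Sum.inr '' (↑F₀ : Set ℕ) ∪ Sum.inr '' Sᶜ) : Set (↥𝒜 ⊕ ℕ)) :=
        Or.inr ⟨m, hmS, rfl⟩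
      exact hsub _ (hsub _ hxF)
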